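/- arXiv:gr-qc/0703049 — 5 statements merged into one kernel-verified Lean document; each statement's English description precedes it below -/
import Mathlib

section
/- For a non-null 2-form F on 4-dimensional Lorentzian space, write F = e^{φ}(cos ψ U + sin ψ ∗U) with U a simple unitary 2-form. Then the Maxwell–Minkowski energy tensor T = −(1/2)(F² + (∗F)²) is independent of ψ, i.e., T equals −(1/2)e^{2φ}(U² + (∗U)²); in particular a duality rotation F ↦ cos ψ F + sin ψ ∗F leaves the energy tensor invariant. -/
/-- For a non-null 2-form `F = e^{φ}(cos ψ U + sin ψ ∗U)` with `U` simple and
unitary, the Maxwell–Minkowski energy tensor `T = -(1/2)(F² + (∗F)²)` is independent of `ψ`,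
i.e. equals `-(1/2)e^{2φ}(U² + (∗U)²)`; in particular duality rotations leave the energy
tensor invariant. -/
theorem energy_tensor_duality_rotation_invariant
    (V : Type*) [AddCommGroup V] [Module ℝ V] [FiniteDimensional ℝ V]
    (hdim : Module.finrank ℝ V = 4)
    (g : V →ₗ[ℝ] V →ₗ[ℝ] ℝ)
    (hgsymm : ∀ x y, g x y = g y x)
    (hgnd : ∀ x, (∀ y, g x y = 0) → x = 0)
    (U sU : Module.End ℝ V) (φ ψ : ℝ)
    -- U is a 2-form (g-skew), simple (U∧U = 0, i.e. tr (U ∘ ∗U) = 0) and unitary (tr U² = -2)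
    (hUskew : ∀ x y, g (U x) y = - g x (U y))
    (hsUskew : ∀ x y, g (sU x) y = - g x (sU y))
    (hsimple : LinearMap.trace ℝ V (U * sU) = 0)
    (hunitary : LinearMap.trace ℝ V (U * U) = -2)
    -- F = e^{φ}(cos ψ U + sin ψ ∗U) and, since ∗∗ = -Id, ∗F = e^{φ}(cos ψ ∗U - sin ψ U)
    (F sF : Module.End ℝ V)
    (hF : F = Real.exp φ • (Real.cos ψ • U + Real.sin ψ • sU))
    (hsF : sF = Real.exp φ • (Real.cos ψ • sU - Real.sin ψ • U)) :
    (-(1/2 : ℝ)) • (F * F + sF * sF) =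
      (-(1/2 : ℝ)) • (Real.exp (2 * φ) • (U * U + sU * sU)) := by
  subst hF hsF
  have h2 : Real.exp (2 * φ) = Real.exp φ * Real.exp φ := by
    rw [two_mul, Real.exp_add]
  have hcs : Real.sin ψ ^ 2 + Real.cos ψ ^ 2 = 1 := Real.sin_sq_add_cos_sq ψ
  simp only [smul_add, smul_sub, smul_smul, add_mul, mul_add, sub_mul, mul_sub,
    smul_mul_assoc, mul_smul_comm, h2]
  match_scalars <;> nlinarith [hcs]
end

section
/- A traceless symmetric endomorphism 𝒲 of a 3-dimensional complex inner-product space has a double eigenvalue ρ and minimal polynomial of degree two (and hence is diagonalizable with eigenvalues ρ, ρ, −2ρ with ρ ≠ 0) if, and only if, a = Tr 𝒲² ≠ 0 and 𝒲² − (b/a)𝒲 − (a/3)Id = 0, where b = Tr 𝒲³; in that case ρ = −b/a. -/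
open Polynomial Module

section TypeDHelpers

variable {W : Type*} [AddCommGroup W] [Module ℂ W]

private lemma typeD_quad_factor {p : Polynomial ℂ} (hm : p.Monic) (hd : p.degree = 2) {r : ℂ}
    (hr : p.IsRoot r) : ∃ s : ℂ, p = (X - C r) * (X - C s) := by
  set q := p /ₘ (X - C r) with hq
  have hf : (X - C r) * q = p := mul_divByMonic_eq_iff_isRoot.2 hr
  have hqm : q.Monic := (monic_X_sub_C r).of_mul_monic_left (by rwa [hf])
  have hdq : q.degree = 1 := by
    have := degree_mul (p := X - C r) (q := q)
    rw [hf, hd, degree_X_sub_C] at this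
    have h2 : (2 : WithBot ℕ) = 1 + 1 := by norm_num
    rw [h2] at this
    exact (WithBot.add_left_cancel (by norm_num) this).symm
  have : q = X - C (-q.coeff 0) := by
    simpa [hqm.leadingCoeff] using eq_X_add_C_of_degree_eq_one hdq
  exact ⟨-q.coeff 0, by rw [← hf, ← this]⟩

private lemma typeD_mul_expand (𝒲 : Module.End ℂ W) (r s : ℂ) :
    (𝒲 - r • 1) * (𝒲 - s • 1)
      = 𝒲 * 𝒲 - (r + s) • 𝒲 + (r * s) • (1 : Module.End ℂ W) := by
  simp only [mul_sub, sub_mul, smul_mul_assoc, mul_smul_comm, smul_smul, one_mul, mul_one]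
  module

private lemma typeD_aeval_quad (𝒲 : Module.End ℂ W) (r s : ℂ) :
    (Polynomial.aeval 𝒲) ((X - C r) * (X - C s))
      = 𝒲 * 𝒲 - (r + s) • 𝒲 + (r * s) • (1 : Module.End ℂ W) := by
  simp only [map_mul, map_sub, aeval_X, aeval_C, Algebra.algebraMap_eq_smul_one,
    mul_sub, sub_mul, smul_mul_assoc, mul_smul_comm, smul_smul, one_mul, mul_one]
  module

private lemma typeD_isProj_aux (𝒲 : Module.End ℂ W) (r s : ℂ)
    (hprod : (𝒲 - r • 1) * (𝒲 - s • 1) = 0) (hrs : r - s ≠ 0) :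
    LinearMap.IsProj (Module.End.eigenspace 𝒲 r) ((r - s)⁻¹ • (𝒲 - s • 1)) := by
  constructor
  · intro x
    rw [Module.End.mem_eigenspace_iff]
    have h0 := LinearMap.ext_iff.mp hprod x
    simp only [Module.End.mul_apply, LinearMap.sub_apply, LinearMap.smul_apply,
      Module.End.one_apply, LinearMap.zero_apply, map_sub, map_smul] at h0 ⊢
    linear_combination (norm := module) (r - s)⁻¹ • h0
  · intro x hx
    rw [Module.End.mem_eigenspace_iff] at hx
    simp only [LinearMap.smul_apply, LinearMap.sub_apply, Module.End.one_apply, hx]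
    rw [← sub_smul, smul_smul, inv_mul_cancel₀ hrs, one_smul]

variable [FiniteDimensional ℂ W]

set_option linter.unusedSectionVars false

private lemma typeD_hasEigenvalue_of_finrank {𝒲 : Module.End ℂ W} {μ : ℂ} {k : ℕ}
    (h : Module.finrank ℂ (Module.End.eigenspace 𝒲 μ) = k) (hk : k ≠ 0) :
    𝒲.HasEigenvalue μ := by
  rw [Module.End.hasEigenvalue_iff]
  intro hbot
  rw [hbot] at h
  simp [finrank_bot] at h
  exact hk h.symm

private lemma typeD_minpoly_deg_two (𝒲 : Module.End ℂ W) {r s : ℂ} (hrs : r ≠ s)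
    (h1 : 𝒲.HasEigenvalue r) (h2 : 𝒲.HasEigenvalue s)
    (hle : (minpoly ℂ 𝒲).degree ≤ 2) : (minpoly ℂ 𝒲).degree = 2 := by
  have hm : (minpoly ℂ 𝒲).Monic := minpoly.monic (Algebra.IsIntegral.isIntegral 𝒲)
  have hr1 : (minpoly ℂ 𝒲).IsRoot r := Module.End.hasEigenvalue_iff_isRoot.mp h1
  have hr2 : (minpoly ℂ 𝒲).IsRoot s := Module.End.hasEigenvalue_iff_isRoot.mp h2
  have hnd : (minpoly ℂ 𝒲).natDegree ≤ 2 := natDegree_le_iff_degree_le.mpr hle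
  have hnd2 : (minpoly ℂ 𝒲).natDegree = 2 := by
    have h01 : (minpoly ℂ 𝒲).natDegree = 0 ∨ (minpoly ℂ 𝒲).natDegree = 1 ∨
        (minpoly ℂ 𝒲).natDegree = 2 := by omega
    rcases h01 with h | h | h
    · exfalso
      have hp1 : minpoly ℂ 𝒲 = 1 := hm.natDegree_eq_zero.mp h
      rw [hp1] at hr1
      simp [IsRoot] at hr1
    · exfalso
      have hp1 : minpoly ℂ 𝒲 = X + C ((minpoly ℂ 𝒲).coeff 0) := hm.eq_X_add_C h
      rw [hp1] at hr1 hr2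
      simp only [IsRoot, eval_add, eval_X, eval_C] at hr1 hr2
      exact hrs (by linear_combination hr1 - hr2)
    · exact h
  rw [degree_eq_natDegree hm.ne_zero, hnd2]; rfl

private lemma typeD_trace_of_quad (hdim : Module.finrank ℂ W = 3) (𝒲 : Module.End ℂ W)
    (htr : LinearMap.trace ℂ W 𝒲 = 0) (u v : ℂ)
    (h : 𝒲 * 𝒲 = u • 𝒲 + v • (1 : Module.End ℂ W)) :
    LinearMap.trace ℂ W (𝒲 * 𝒲) = 3 * v ∧
      LinearMap.trace ℂ W (𝒲 * 𝒲 * 𝒲) = 3 * (u * v) := by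
  have h1 : LinearMap.trace ℂ W (𝒲 * 𝒲) = 3 * v := by
    rw [h, map_add, map_smul, map_smul, htr, LinearMap.trace_one, hdim]
    push_cast [smul_eq_mul]; ring
  have h3 : 𝒲 * 𝒲 * 𝒲 = (u * u + v) • 𝒲 + (u * v) • (1 : Module.End ℂ W) := by
    rw [h, add_mul, smul_mul_assoc, smul_mul_assoc, one_mul, h]
    module
  refine ⟨h1, ?_⟩
  rw [h3, map_add, map_smul, map_smul, htr, LinearMap.trace_one, hdim]
  push_cast [smul_eq_mul]; ring

private lemma typeD_forward_core (hdim : Module.finrank ℂ W = 3) (𝒲 : Module.End ℂ W)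
    (htr : LinearMap.trace ℂ W 𝒲 = 0) {ρ : ℂ} (hρ : ρ ≠ 0)
    (h2 : Module.finrank ℂ (Module.End.eigenspace 𝒲 ρ) = 2)
    (h1 : Module.finrank ℂ (Module.End.eigenspace 𝒲 (-2 * ρ)) = 1)
    (hdeg : (minpoly ℂ 𝒲).degree = 2) :
    LinearMap.trace ℂ W (𝒲 * 𝒲) = 6 * ρ ^ 2 ∧
      LinearMap.trace ℂ W (𝒲 * 𝒲 * 𝒲) = -6 * ρ ^ 3 ∧
      𝒲 * 𝒲 = (-ρ) • 𝒲 + (2 * ρ ^ 2) • (1 : Module.End ℂ W) := by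
  have he1 : 𝒲.HasEigenvalue ρ := typeD_hasEigenvalue_of_finrank h2 (by norm_num)
  have he2 : 𝒲.HasEigenvalue (-2 * ρ) := typeD_hasEigenvalue_of_finrank h1 (by norm_num)
  have hm : (minpoly ℂ 𝒲).Monic := minpoly.monic (Algebra.IsIntegral.isIntegral 𝒲)
  have hr1 : (minpoly ℂ 𝒲).IsRoot ρ := Module.End.hasEigenvalue_iff_isRoot.mp he1
  have hr2 : (minpoly ℂ 𝒲).IsRoot (-2 * ρ) := Module.End.hasEigenvalue_iff_isRoot.mp he2
  obtain ⟨s, hfac⟩ := typeD_quad_factor hm hdeg hr1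
  have hs : s = -2 * ρ := by
    have h' := hr2
    rw [hfac] at h'
    simp only [IsRoot, eval_mul, eval_sub, eval_X, eval_C, mul_eq_zero] at h'
    rcases h' with h | h
    · exfalso
      apply hρ
      have h3 : (-3 : ℂ) * ρ = 0 := by linear_combination h
      simpa using h3
    · linear_combination -h
  have haev := minpoly.aeval ℂ 𝒲
  rw [hfac, hs, typeD_aeval_quad] at haev
  have h5 : 𝒲 * 𝒲 - ((-ρ) • 𝒲 + (2 * ρ ^ 2) • (1 : Module.End ℂ W)) = 0 := by
    rw [← haev]; module
  have hq : 𝒲 * 𝒲 = (-ρ) • 𝒲 + (2 * ρ ^ 2) • (1 : Module.End ℂ W) := sub_eq_zero.mp h5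
  obtain ⟨t1, t2⟩ := typeD_trace_of_quad hdim 𝒲 htr (-ρ) (2 * ρ ^ 2) hq
  exact ⟨by rw [t1]; ring, by rw [t2]; ring, hq⟩

private lemma typeD_backward_core (hdim : Module.finrank ℂ W = 3) (𝒲 : Module.End ℂ W)
    (htr : LinearMap.trace ℂ W 𝒲 = 0) (c k : ℂ) (hk : k ≠ 0)
    (heq : 𝒲 * 𝒲 = c • 𝒲 + k • (1 : Module.End ℂ W)) :
    ∃ ρ : ℂ, ρ ≠ 0 ∧ Module.finrank ℂ (Module.End.eigenspace 𝒲 ρ) = 2 ∧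
      Module.finrank ℂ (Module.End.eigenspace 𝒲 (-2 * ρ)) = 1 ∧
      (minpoly ℂ 𝒲).degree = 2 := by
  obtain ⟨z, hz⟩ := IsAlgClosed.exists_pow_nat_eq (c ^ 2 + 4 * k) (n := 2) (by norm_num)
  set r := (c + z) / 2 with hrdef
  set s := (c - z) / 2 with hsdef
  have hsum : r + s = c := by rw [hrdef, hsdef]; ring
  have hprodrs : r * s = -k := by rw [hrdef, hsdef]; linear_combination ((-1 : ℂ)/4) * hz
  have hr0 : r ≠ 0 := by
    intro h
    apply hk
    rw [h, zero_mul] at hprodrs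
    linear_combination hprodrs
  have hs0 : s ≠ 0 := by
    intro h
    apply hk
    rw [h, mul_zero] at hprodrs
    linear_combination hprodrs
  have hprod : (𝒲 - r • 1) * (𝒲 - s • 1) = 0 := by
    rw [typeD_mul_expand, hsum, hprodrs, heq]; module
  by_cases hrs : r = s
  · exfalso
    rw [← hrs] at hprod
    have hnil : IsNilpotent (𝒲 - r • (1 : Module.End ℂ W)) :=
      ⟨2, by rw [pow_two]; exact hprod⟩
    have htr0 := (LinearMap.isNilpotent_trace_of_isNilpotent hnil).eq_zero
    rw [map_sub, map_smul, htr, LinearMap.trace_one, hdim] at htr0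
    push_cast [smul_eq_mul] at htr0
    exact hr0 (by linear_combination htr0 * (-1/3 : ℂ))
  · have hrs1 : r - s ≠ 0 := sub_ne_zero.mpr hrs
    have hsr1 : s - r ≠ 0 := sub_ne_zero.mpr (Ne.symm hrs)
    have hprod' : (𝒲 - s • 1) * (𝒲 - r • 1) = 0 := by
      rw [typeD_mul_expand]
      rw [typeD_mul_expand] at hprod
      rw [show s + r = r + s from by ring, show s * r = r * s from by ring]
      exact hprod
    have hP := typeD_isProj_aux 𝒲 r s hprod hrs1
    have hQ := typeD_isProj_aux 𝒲 s r hprod' hsr1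
    have hPt := hP.trace
    have hQt := hQ.trace
    have htrP : LinearMap.trace ℂ W ((r - s)⁻¹ • (𝒲 - s • 1)) = (r - s)⁻¹ * (-(3 * s)) := by
      rw [map_smul, map_sub, map_smul, htr, LinearMap.trace_one, hdim]
      push_cast [smul_eq_mul]; ring
    have htrQ : LinearMap.trace ℂ W ((s - r)⁻¹ • (𝒲 - r • 1)) = (s - r)⁻¹ * (-(3 * r)) := by
      rw [map_smul, map_sub, map_smul, htr, LinearMap.trace_one, hdim]
      push_cast [smul_eq_mul]; ring
    set m := Module.finrank ℂ (Module.End.eigenspace 𝒲 r) with hmdef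
    set n := Module.finrank ℂ (Module.End.eigenspace 𝒲 s) with hndef
    have hmC : (m : ℂ) = (r - s)⁻¹ * (-(3 * s)) := by rw [← htrP, hPt]
    have hnC : (n : ℂ) = (s - r)⁻¹ * (-(3 * r)) := by rw [← htrQ, hQt]
    have hsum3 : m + n = 3 := by
      have h3 : (m : ℂ) + n = 3 := by rw [hmC, hnC]; field_simp; ring
      exact_mod_cast h3
    have hlin : (m : ℂ) * r + (n : ℂ) * s = 0 := by
      rw [hmC, hnC]; field_simp; ring
    have hann : (Polynomial.aeval 𝒲) ((X - C r) * (X - C s)) = 0 := by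
      rw [typeD_aeval_quad, hsum, hprodrs, heq]; module
    have hdvd : minpoly ℂ 𝒲 ∣ (X - C r) * (X - C s) := minpoly.dvd ℂ 𝒲 hann
    have hne : (X - C r) * (X - C s) ≠ 0 := ((monic_X_sub_C r).mul (monic_X_sub_C s)).ne_zero
    have hle : (minpoly ℂ 𝒲).degree ≤ 2 := by
      have h := degree_le_of_dvd hdvd hne
      rw [degree_mul, degree_X_sub_C, degree_X_sub_C] at h
      exact h
    have hcases : m = 0 ∨ m = 1 ∨ m = 2 ∨ m = 3 := by omega
    rcases hcases with hm' | hm' | hm' | hm'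
    · exfalso
      have hn' : n = 3 := by omega
      rw [hm', hn'] at hlin
      push_cast at hlin
      exact hs0 (by linear_combination hlin * (1/3 : ℂ))
    · have hn' : n = 2 := by omega
      rw [hm', hn'] at hlin
      push_cast at hlin
      have hr2s : -2 * s = r := by linear_combination -hlin
      have he_r : 𝒲.HasEigenvalue r := typeD_hasEigenvalue_of_finrank hm' (by norm_num)
      have he_s : 𝒲.HasEigenvalue s := typeD_hasEigenvalue_of_finrank hn' (by norm_num)
      exact ⟨s, hs0, hn', by rw [hr2s]; exact hm',
        typeD_minpoly_deg_two 𝒲 hrs he_r he_s hle⟩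
    · have hn' : n = 1 := by omega
      rw [hm', hn'] at hlin
      push_cast at hlin
      have hs2r : -2 * r = s := by linear_combination -hlin
      have he_r : 𝒲.HasEigenvalue r := typeD_hasEigenvalue_of_finrank hm' (by norm_num)
      have he_s : 𝒲.HasEigenvalue s := typeD_hasEigenvalue_of_finrank hn' (by norm_num)
      exact ⟨r, hr0, hm', by rw [hs2r]; exact hn',
        typeD_minpoly_deg_two 𝒲 hrs he_r he_s hle⟩
    · exfalso
      have hn' : n = 0 := by omega
      rw [hm', hn'] at hlin
      push_cast at hlin
      exact hr0 (by linear_combination hlin * (1/3 : ℂ))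

end TypeDHelpers

/-- A traceless symmetric endomorphism `𝒲` of a 3-dimensional complex
inner-product space has a double eigenvalue `ρ ≠ 0` and minimal polynomial of degree two
(hence is diagonalizable with eigenvalues `ρ, ρ, -2ρ`) if and only if `a = Tr 𝒲² ≠ 0` and
`𝒲² - (b/a)𝒲 - (a/3)Id = 0` where `b = Tr 𝒲³`; in that case `ρ = -b/a`. -/
theorem type_D_characterization
    (W : Type*) [AddCommGroup W] [Module ℂ W] [FiniteDimensional ℂ W]
    (hdim : Module.finrank ℂ W = 3)
    (G : W →ₗ[ℂ] W →ₗ[ℂ] ℂ)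
    (hGsymm : ∀ x y, G x y = G y x)
    (hGnd : ∀ x, (∀ y, G x y = 0) → x = 0)
    (𝒲 : Module.End ℂ W)
    (h𝒲symm : ∀ x y, G (𝒲 x) y = G x (𝒲 y))
    (htr : LinearMap.trace ℂ W 𝒲 = 0) :
    ((∃ ρ : ℂ, ρ ≠ 0 ∧
        Module.finrank ℂ (Module.End.eigenspace 𝒲 ρ) = 2 ∧
        Module.finrank ℂ (Module.End.eigenspace 𝒲 (-2 * ρ)) = 1 ∧
        (minpoly ℂ 𝒲).degree = 2) ↔
      (LinearMap.trace ℂ W (𝒲 * 𝒲) ≠ 0 ∧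
        𝒲 * 𝒲 - (LinearMap.trace ℂ W (𝒲 * 𝒲 * 𝒲) / LinearMap.trace ℂ W (𝒲 * 𝒲)) • 𝒲
          - (LinearMap.trace ℂ W (𝒲 * 𝒲) / 3) • (1 : Module.End ℂ W) = 0)) ∧
    (∀ ρ : ℂ, ρ ≠ 0 →
        Module.finrank ℂ (Module.End.eigenspace 𝒲 ρ) = 2 →
        Module.finrank ℂ (Module.End.eigenspace 𝒲 (-2 * ρ)) = 1 →
        (minpoly ℂ 𝒲).degree = 2 →
        ρ = -(LinearMap.trace ℂ W (𝒲 * 𝒲 * 𝒲) / LinearMap.trace ℂ W (𝒲 * 𝒲))) := by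
  constructor
  · constructor
    · rintro ⟨ρ, hρ, h2, h1, hdeg⟩
      obtain ⟨ha, hb, hq⟩ := typeD_forward_core hdim 𝒲 htr hρ h2 h1 hdeg
      have ha0 : (6 : ℂ) * ρ ^ 2 ≠ 0 := mul_ne_zero (by norm_num) (pow_ne_zero 2 hρ)
      refine ⟨by rw [ha]; exact ha0, ?_⟩
      rw [ha, hb, hq]
      have hba : (-6 * ρ ^ 3) / (6 * ρ ^ 2) = -ρ := by
        field_simp
      rw [hba]
      have h63 : (6 * ρ ^ 2) / 3 = 2 * ρ ^ 2 := by ring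
      rw [h63]
      module
    · rintro ⟨ha, heq⟩
      have hk : LinearMap.trace ℂ W (𝒲 * 𝒲) / 3 ≠ 0 := div_ne_zero ha (by norm_num)
      apply typeD_backward_core hdim 𝒲 htr
        (LinearMap.trace ℂ W (𝒲 * 𝒲 * 𝒲) / LinearMap.trace ℂ W (𝒲 * 𝒲))
        (LinearMap.trace ℂ W (𝒲 * 𝒲) / 3) hk
      rw [sub_sub] at heq
      have := sub_eq_zero.mp heq
      exact this
  · intro ρ hρ h2 h1 hdeg
    obtain ⟨ha, hb, -⟩ := typeD_forward_core hdim 𝒲 htr hρ h2 h1 hdeg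
    rw [ha, hb]
    field_simp
end

section
/- If a 2+2 almost-product structure on a 4-dimensional Lorentzian manifold has umbilical, minimal (expansion vector Φ = 0) and integrable (rotation vector Ψ = 0) principal planes, and the metric is accordingly a product metric g = g₁ ⊕ g₂ of two 2-dimensional metrics, then the traceless Ricci condition r_v + r_h = 0 (where r_v, r_h are the Gaussian-curvature contributions of the two factors) forces the Weyl tensor of the product to vanish. -/
/-- The Kulkarni–Nomizu product of two symmetric bilinear forms. -/
def kulkarniNomizu {V : Type*} [AddCommGroup V] [Module ℝ V]
    (A B : V → V → ℝ) : V → V → V → V → ℝ :=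
  fun x y z t => A x z * B y t + A y t * B x z - A x t * B y z - A y z * B x t

/-- For a 4-dimensional product metric `g = g₁ ⊕ g₂` of a Lorentzian
2-metric with Gaussian curvature `κ₁` and a Riemannian 2-metric with Gaussian curvature
`κ₂` (Riemann tensor the direct sum of the two constant-curvature pieces, Ricci tensor
`r_v v + r_h h` with `r_v = 2κ₁`, `r_h = 2κ₂`), the traceless condition `r_v + r_h = 0`
forces the Weyl tensor of the product to vanish. -/
theorem product_metric_traceless_ricci_implies_weyl_zero
    (V : Type*) [AddCommGroup V] [Module ℝ V] [FiniteDimensional ℝ V]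
    (hdim : Module.finrank ℝ V = 4)
    (g : V →ₗ[ℝ] V →ₗ[ℝ] ℝ)
    (hgsymm : ∀ x y, g x y = g y x)
    (hgnd : ∀ x, (∀ y, g x y = 0) → x = 0)
    -- the projectors v, h onto the two 2-dimensional factors
    (v h : Module.End ℝ V)
    (hvh : v + h = 1)
    (hv : v * v = v) (hh : h * h = h)
    (hvsymm : ∀ x y, g (v x) y = g x (v y))
    (hvrank : Module.finrank ℝ (LinearMap.range v) = 2)
    (hhrank : Module.finrank ℝ (LinearMap.range h) = 2)
    -- Gaussian curvatures of the two factors; r_v = 2κ₁, r_h = 2κ₂ are their scalar curvatures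
    (κ₁ κ₂ : ℝ)
    (Riem Weyl : V → V → V → V → ℝ) (Ric : V → V → ℝ) (s : ℝ)
    -- the Riemann tensor of the product of two 2-dimensional metrics
    (hRiem : Riem = fun x y z t =>
      κ₁ * (g (v x) (v z) * g (v y) (v t) - g (v x) (v t) * g (v y) (v z)) +
      κ₂ * (g (h x) (h z) * g (h y) (h t) - g (h x) (h t) * g (h y) (h z)))
    -- its Ricci tensor r_v v + r_h h (as bilinear forms, κ₁ g_v + κ₂ g_h) and scalar curvature
    (hRic : Ric = fun x y => κ₁ * g (v x) (v y) + κ₂ * g (h x) (h y))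
    (hs : s = 2 * κ₁ + 2 * κ₂)
    -- the Weyl tensor in dimension 4
    (hWeyl : Weyl = fun x y z t =>
      Riem x y z t - (1 / 2) * kulkarniNomizu Ric (fun x' y' => g x' y') x y z t
        + (s / 12) * kulkarniNomizu (fun x' y' => g x' y') (fun x' y' => g x' y') x y z t)
    -- the traceless Ricci condition r_v + r_h = 0
    (htraceless : 2 * κ₁ + 2 * κ₂ = 0) :
    Weyl = fun _ _ _ _ => 0 := by
  have hκ : κ₂ = -κ₁ := by linarith
  have hhx : ∀ x : V, h x = x - v x := by
    intro x
    have := congrArg (fun f : Module.End ℝ V => f x) hvh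
    simp only [LinearMap.add_apply, Module.End.one_apply] at this
    exact eq_sub_of_add_eq' this
  have key : ∀ x y : V, g (h x) (h y) = g x y - g (v x) (v y) := by
    intro x y
    have h1 : ∀ a b : V, g (v a) (v b) = g (v a) b := by
      intro a b
      have := hvsymm (v a) b
      have hvv : v (v a) = v a := by
        have := congrArg (fun f : Module.End ℝ V => f a) hv
        simpa [Module.End.mul_apply] using this
      rw [hvv] at this
      exact this.symm
    rw [hhx x, hhx y]
    simp only [map_sub, LinearMap.sub_apply]
    have e1 : g x (v y) = g (v x) (v y) := by
      rw [hgsymm x (v y), ← h1 y x, hgsymm (v y) (v x)]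
    have e2 : g (v x) y = g (v x) (v y) := (h1 x y).symm
    linarith [e1, e2]
  subst hRiem hRic hs hWeyl hκ
  funext x y z t
  simp only [kulkarniNomizu, key]
  ring
end

section
/- Let F be a non-null 2-form with intrinsic elements (U, φ, ψ), i.e., F = e^{φ}(cos ψ U + sin ψ ∗U) with U simple and unitary. Then the source-free Maxwell equations δF = 0 and δ∗F = 0 hold if, and only if, dφ = Φ[U] and dψ = Ψ[U], where Φ[U] = ∗U(δ∗U) − U(δU) and Ψ[U] = ∗U(δU) + U(δ∗U). -/
/-- Pure linear-algebra core of the Rainich/Maxwell equivalence. -/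
lemma maxwell_rainich_key_alg {R : Type*} [CommRing R] {Ω1 : Type*} [AddCommGroup Ω1]
    [Module R Ω1] (P Q v : Ω1 →ₗ[R] Ω1)
    (h1 : ∀ x, P (P x) = v x)
    (h2 : ∀ x, Q (Q x) = v x - x)
    (h3 : ∀ x, P (Q x) = 0)
    (a b p q : Ω1) :
    (a + P p + Q q = 0 ∧ b + Q p - P q = 0) ↔ (p = Q b - P a ∧ q = Q a + P b) := by
  have h4 : ∀ x, v (Q x) = 0 := by
    intro x
    have := h1 (Q x)
    rw [h3 x, map_zero] at this
    exact this.symm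
  have h5 : ∀ x, Q (v x) = 0 := by
    intro x
    have hv : v x = Q (Q x) + x := by rw [h2]; abel
    rw [hv, map_add, h2, h4]
    abel
  constructor
  · rintro ⟨hX, hY⟩
    have ha : a = -(P p) - Q q := by
      have h := hX
      rw [show a + P p + Q q = a - (-(P p) - Q q) from by abel] at h
      exact sub_eq_zero.mp h
    have hb : b = P q - Q p := by
      have h := hY
      rw [show b + Q p - P q = b - (P q - Q p) from by abel] at h
      exact sub_eq_zero.mp h
    have hq1 : q = Q a + P b + Q (P p) := by
      rw [ha, hb]
      simp only [map_sub, map_neg, h2, h1, h3]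
      abel
    have hQPq : Q (P q) = 0 := by
      rw [hq1]
      simp only [map_add, h3, h1, h5, map_zero, zero_add, add_zero]
    have hp2 : p = Q b - P a := by
      rw [ha, hb]
      simp only [map_sub, map_neg, h2, h1, h3, hQPq]
      abel
    have hQPp : Q (P p) = 0 := by
      rw [hp2]
      simp only [map_sub, h3, h1, h5, map_zero, zero_sub, map_neg, neg_zero]
    refine ⟨hp2, ?_⟩
    rw [hq1, hQPp, add_zero]
  · rintro ⟨hp, hq⟩
    have hb2 : b = P q - Q p - Q (P a) := by
      rw [hp, hq]
      simp only [map_add, map_sub, h1, h2, h3]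
      abel
    have hQPb : Q (P b) = 0 := by
      rw [hb2]
      simp only [map_sub, map_add, h1, h3, h5, map_zero, sub_zero, zero_sub, map_neg, neg_zero]
    have hX : a + P p + Q q = 0 := by
      rw [hp, hq]
      simp only [map_sub, map_add, h1, h2, h3, hQPb]
      abel
    have ha2 : a = -(P p) - Q q := by
      have h := hX
      rw [show a + P p + Q q = a - (-(P p) - Q q) from by abel] at h
      exact sub_eq_zero.mp h
    have hQPa : Q (P a) = 0 := by
      rw [ha2]
      simp only [map_sub, map_neg, h1, h3, h5, map_zero, neg_zero, sub_zero, zero_sub]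
    have hY : b + Q p - P q = 0 := by
      rw [hp, hq]
      simp only [map_sub, map_add, h1, h2, h3, hQPa]
      abel
    exact ⟨hX, hY⟩

/-- For a non-null 2-form `F = e^{φ}(cos ψ U + sin ψ ∗U)` with `U` simple
and unitary, the source-free Maxwell equations `δF = 0`, `δ∗F = 0` hold if and only if
`dφ = Φ[U]` and `dψ = Ψ[U]`, where `Φ[U] = ∗U(δ∗U) - U(δU)` and
`Ψ[U] = ∗U(δU) + U(δ∗U)`. -/
theorem maxwell_rainich_equations
    (M : Type*)
    -- the modules of 1-forms and 2-forms over the ring of functions on M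
    (Ω1 Ω2 : Type*) [AddCommGroup Ω1] [Module (M → ℝ) Ω1]
    [AddCommGroup Ω2] [Module (M → ℝ) Ω2]
    -- exterior derivative of functions, codifferential on 2-forms, Hodge dual
    (d : (M → ℝ) → Ω1) (δ : Ω2 → Ω1)
    (star : Ω2 →ₗ[M → ℝ] Ω2)
    -- action of a 2-form as endomorphism on 1-forms
    (act : Ω2 →ₗ[M → ℝ] Ω1 →ₗ[M → ℝ] Ω1)
    (hstar2 : star ∘ₗ star = -LinearMap.id)
    -- d is additive and satisfies the Leibniz rule
    (hdadd : ∀ f₁ f₂ : M → ℝ, d (f₁ + f₂) = d f₁ + d f₂)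
    (hdmul : ∀ f₁ f₂ : M → ℝ, d (f₁ * f₂) = f₁ • d f₂ + f₂ • d f₁)
    (hdexp : ∀ f : M → ℝ, d (fun m => Real.exp (f m)) = (fun m => Real.exp (f m)) • d f)
    (hdcos : ∀ f : M → ℝ, d (fun m => Real.cos (f m)) = -((fun m => Real.sin (f m)) • d f))
    (hdsin : ∀ f : M → ℝ, d (fun m => Real.sin (f m)) = (fun m => Real.cos (f m)) • d f)
    -- the codifferential is additive and satisfies the Leibniz rule δ(fG) = fδG + G(df)
    (hδadd : ∀ G₁ G₂ : Ω2, δ (G₁ + G₂) = δ G₁ + δ G₂)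
    (hδLeib : ∀ (f : M → ℝ) (Gf : Ω2), δ (f • Gf) = f • δ Gf + act Gf (d f))
    -- U is a simple unitary 2-form: U² = v, (∗U)² = -(1 - v), U·∗U = 0
    (U : Ω2) (v : Ω1 →ₗ[M → ℝ] Ω1)
    (hU2 : act U ∘ₗ act U = v)
    (hsU2 : act (star U) ∘ₗ act (star U) = v - LinearMap.id)
    (hUsU : act U ∘ₗ act (star U) = 0)
    -- the intrinsic elements (U, φ, ψ) of the non-null 2-form F
    (φ ψ : M → ℝ) (F : Ω2)
    (hF : F = (fun m => Real.exp (φ m) * Real.cos (ψ m)) • U +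
      (fun m => Real.exp (φ m) * Real.sin (ψ m)) • star U) :
    (δ F = 0 ∧ δ (star F) = 0) ↔
      (d φ = act (star U) (δ (star U)) - act U (δ U) ∧
       d ψ = act (star U) (δ U) + act U (δ (star U))) := by
  set E : M → ℝ := fun m => Real.exp (φ m) with hE
  set C : M → ℝ := fun m => Real.cos (ψ m) with hC
  set S : M → ℝ := fun m => Real.sin (ψ m) with hS
  -- pointwise algebraic facts about the action
  have h1 : ∀ x, act U (act U x) = v x := fun x => by
    simpa using LinearMap.congr_fun hU2 x
  have h2 : ∀ x, act (star U) (act (star U) x) = v x - x := fun x => by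
    simpa using LinearMap.congr_fun hsU2 x
  have h3 : ∀ x, act U (act (star U) x) = 0 := fun x => by
    simpa using LinearMap.congr_fun hUsU x
  -- facts about d
  have hdE : d E = E • d φ := hdexp φ
  have hdC : d C = -(S • d ψ) := hdcos ψ
  have hdS : d S = C • d ψ := hdsin ψ
  have htrig : C * C + S * S = 1 := by
    funext m
    simp only [hC, hS, Pi.add_apply, Pi.mul_apply, Pi.one_apply]
    linear_combination Real.sin_sq_add_cos_sq (ψ m)
  have hd0 : d 0 = 0 := by
    have h := hdadd 0 0
    rw [add_zero] at h
    exact (add_left_cancel (a := d (0 : M → ℝ)) (by rw [add_zero]; exact h)).symm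
  have hdneg : ∀ f : M → ℝ, d (-f) = -(d f) := by
    intro f
    have h := hdadd f (-f)
    rw [add_neg_cancel, hd0] at h
    exact (neg_eq_of_add_eq_zero_right h.symm).symm
  have hF' : F = (E * C) • U + (E * S) • star U := by rw [hF]; rfl
  have hdEC : d (E * C) = (E * C) • d φ - (E * S) • d ψ := by
    rw [hdmul E C, hdE, hdC]
    module
  have hdES : d (E * S) = (E * S) • d φ + (E * C) • d ψ := by
    rw [hdmul E S, hdE, hdS]
    module
  have hssU : star (star U) = -U := by
    have := LinearMap.congr_fun hstar2 U
    simpa using this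
  have hsF : star F = (E * C) • star U + (-(E * S)) • U := by
    rw [hF', map_add, map_smul, map_smul, hssU, smul_neg, neg_smul]
  -- abbreviations
  set a : Ω1 := δ U with haa
  set b : Ω1 := δ (star U) with hbb
  set X : Ω1 := a + act U (d φ) + act (star U) (d ψ) with hX
  set Y : Ω1 := b + act (star U) (d φ) - act U (d ψ) with hY
  have hdF : δ F = (E * C) • X + (E * S) • Y := by
    rw [hF', hδadd, hδLeib, hδLeib, hdEC, hdES, hX, hY]
    simp only [map_add, map_sub, map_neg, map_smul]
    module
  have hdsF : δ (star F) = (E * C) • Y - (E * S) • X := by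
    rw [hsF, hδadd, hδLeib, hδLeib, hdEC, hdneg, hdES, hX, hY]
    simp only [map_add, map_sub, map_neg, map_smul]
    module
  have hkey := maxwell_rainich_key_alg (act U) (act (star U)) v h1 h2 h3 a b (d φ) (d ψ)
  have hinv : (fun m => Real.exp (-(φ m))) * E = 1 := by
    funext m
    simp only [hE, Pi.mul_apply, Pi.one_apply, ← Real.exp_add]
    simp
  constructor
  · rintro ⟨hM1, hM2⟩
    rw [hdF] at hM1
    rw [hdsF] at hM2
    have hEX : E • X = 0 := by
      have h : E • X = C • ((E * C) • X + (E * S) • Y) - S • ((E * C) • Y - (E * S) • X) := by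
        match_scalars <;>
        first
          | ring1
          | linear_combination (E : M → ℝ) * htrig
          | linear_combination (-(E : M → ℝ)) * htrig
      rw [h, hM1, hM2, smul_zero, smul_zero, sub_zero]
    have hEY : E • Y = 0 := by
      have h : E • Y = S • ((E * C) • X + (E * S) • Y) + C • ((E * C) • Y - (E * S) • X) := by
        match_scalars <;>
        first
          | ring1
          | linear_combination (E : M → ℝ) * htrig
          | linear_combination (-(E : M → ℝ)) * htrig
      rw [h, hM1, hM2, smul_zero, smul_zero, add_zero]
    have hX0 : X = 0 := by
      calc X = ((fun m => Real.exp (-(φ m))) * E) • X := by rw [hinv, one_smul]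
        _ = (fun m => Real.exp (-(φ m))) • (E • X) := by rw [mul_smul]
        _ = 0 := by rw [hEX, smul_zero]
    have hY0 : Y = 0 := by
      calc Y = ((fun m => Real.exp (-(φ m))) * E) • Y := by rw [hinv, one_smul]
        _ = (fun m => Real.exp (-(φ m))) • (E • Y) := by rw [mul_smul]
        _ = 0 := by rw [hEY, smul_zero]
    exact hkey.mp ⟨by rw [← hX]; exact hX0, by rw [← hY]; exact hY0⟩
  · rintro ⟨hp, hq⟩
    obtain ⟨hX0, hY0⟩ := hkey.mpr ⟨hp, hq⟩
    rw [← hX] at hX0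
    rw [← hY] at hY0
    constructor
    · rw [hdF, hX0, hY0, smul_zero, smul_zero, add_zero]
    · rw [hdsF, hX0, hY0, smul_zero, smul_zero, sub_zero]
end

section
/- For real numbers A, B, C, D with A² + B² ≠ 0 and complex numbers a = (A − iB)/2, b = (C − iD)/2, the real double 2-form P = W − αG − βη, with α = −(AC+BD)/(A²+B²) and β = (AD−BC)/(A²+B²), satisfies: P is twice the real part of the self-dual tensor 𝒫 = 𝒲 + (b/a)𝒢, where 𝒲 = (1/2)(W − i∗W) and 𝒢 = (1/2)(G − iη). Consequently, for a real symmetric tensor R, the real alignment condition R^μ_{(α}P_{β)μγδ} = 0 is equivalent to the complex condition R^μ_{(α}𝒫_{β)μγδ} = 0. -/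
/-!
With `z = b / a`, the self-dual parts `𝒲 = (W - i∗W)/2` and `𝒢 = (G - i∗G)/2` of real tensors
satisfy `𝒲 + conj 𝒲 = W` and `z 𝒢 + conj (z 𝒢) = (Re z) G + (Im z) ∗G`, and a direct computation
gives `Re z = -α`, `Im z = -β`; hence `P = 𝒫 + conj 𝒫`. The contraction with `R` is real and commutes
with `∗`, so it maps `𝒫` to a self-dual `z'` with `R·P = z' + conj z'`. If this vanishes then
`z' = -conj z'` is also anti-self-dual, hence zero.
-/

open Complex

theorem div_sub_mul_I_re (A B C D : ℝ) :
    (((C : ℂ) - D * I) / ((A : ℂ) - B * I)).re = (A * C + B * D) / (A ^ 2 + B ^ 2) := by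
  simp only [div_re, sub_re, ofReal_re, mul_re, I_re, mul_zero, ofReal_im, I_im, mul_one, sub_self,
    sub_zero, normSq_apply, sub_im, mul_im, add_zero, zero_sub, mul_neg, neg_mul, neg_neg]
  ring

theorem div_sub_mul_I_im (A B C D : ℝ) :
    (((C : ℂ) - D * I) / ((A : ℂ) - B * I)).im = (B * C - A * D) / (A ^ 2 + B ^ 2) := by
  simp only [div_im, sub_im, ofReal_im, mul_im, ofReal_re, I_im, mul_one, I_re, mul_zero, add_zero,
    zero_sub, sub_re, mul_re, sub_self, sub_zero, neg_mul, normSq_apply, mul_neg, neg_neg]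
  ring

section SelfDualPart

variable {M : Type*} [AddCommGroup M] [Module ℂ M]

noncomputable def selfDualPart (s : Module.End ℂ M) (x : M) : M :=
  ((1 : ℂ) / 2) • (x - I • s x)

theorem apply_selfDualPart {s : Module.End ℂ M} (hs : s * s = -1) (x : M) :
    s (selfDualPart s x) = I • selfDualPart s x := by
  have hss : s (s x) = -x := by simpa using LinearMap.congr_fun hs x
  simp only [selfDualPart, map_smul, map_sub, hss]
  match_scalars
  · linear_combination (1 / 2 : ℂ) * I_sq
  · ring

theorem selfDualPart_add_smul_selfDualPart_add_conj (σ : M →ₗ⋆[ℂ] M) {s : Module.End ℂ M}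
    (hσs : ∀ x, σ (s x) = s (σ x)) {x y : M} (hx : σ x = x) (hy : σ y = y) (z : ℂ) :
    selfDualPart s x + z • selfDualPart s y + σ (selfDualPart s x + z • selfDualPart s y) =
      x + (z.re : ℂ) • y + (z.im : ℂ) • s y := by
  simp only [selfDualPart, map_add, map_smulₛₗ, map_sub, hσs, hx, hy, map_div₀, map_one,
    map_ofNat, conj_I]
  rw [re_eq_add_conj, im_eq_sub_conj]
  match_scalars <;> field_simp
  · ring
  · ring
  · linear_combination (starRingEnd ℂ z - z) * I_sq

end SelfDualPart

theorem add_conj_eq_zero_iff_of_apply_eq_I_smul {E : Type*} [AddCommGroup E] [Module ℂ E]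
    (σ : E → E) (hσ : ∀ (c : ℂ) x, σ (c • x) = starRingEnd ℂ c • σ x)
    (s : Module.End ℂ E) (hσs : ∀ x, σ (s x) = s (σ x)) {z : E} (hz : s z = I • z) :
    z + σ z = 0 ↔ z = 0 := by
  have hσ0 : σ 0 = 0 := by simpa using hσ 0 0
  refine ⟨fun h => ?_, fun h => by rw [h, hσ0, add_zero]⟩
  have hσz : σ z = -z := eq_neg_of_add_eq_zero_right h
  have hIz : I • z = -(I • z) := by
    have := hσs z
    rwa [hz, hσ, conj_I, hσz, map_neg, hz, neg_smul, smul_neg, neg_neg] at this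
  have h2Iz : (2 * I) • z = 0 := by
    rw [two_mul, add_smul]
    exact add_eq_zero_iff_eq_neg.mpr hIz
  exact (smul_eq_zero.mp h2Iz).resolve_left (by simp)

theorem real_vs_complex_alignment_general
    -- Dm: complexified double 2-forms; Em: complexified target of the contraction with R
    (Dm Em : Type*) [AddCommGroup Dm] [Module ℂ Dm] [AddCommGroup Em] [Module ℂ Em]
    -- conjugations (real structures)
    (conjD : Dm → Dm)
    (hDadd : ∀ x y, conjD (x + y) = conjD x + conjD y)
    (hDsmul : ∀ (c : ℂ) (x : Dm), conjD (c • x) = (starRingEnd ℂ c) • conjD x)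
    (conjE : Em → Em)
    (hEsmul : ∀ (c : ℂ) (x : Em), conjE (c • x) = (starRingEnd ℂ c) • conjE x)
    -- the Hodge dual acting on the last index pair of double 2-forms, and on the target
    (s : Module.End ℂ Dm) (hs2 : s * s = -1)
    (hsconj : ∀ x, conjD (s x) = s (conjD x))
    (sE : Module.End ℂ Em)
    (hsEconj : ∀ x, conjE (sE x) = sE (conjE x))
    -- the real tensors W (Weyl), G = (1/2)g∧g and η (volume element); ∗G = η, ∗η = -G
    (Wd Gd ηd : Dm)
    (hWreal : conjD Wd = Wd) (hGreal : conjD Gd = Gd)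
    (hsG : s Gd = ηd)
    -- the invariants
    (A B C D : ℝ)
    (a b : ℂ)
    (ha : a = ((A : ℂ) - (B : ℂ) * Complex.I) / 2)
    (hb : b = ((C : ℂ) - (D : ℂ) * Complex.I) / 2)
    (α β : ℝ)
    (hα : α = -(A * C + B * D) / (A ^ 2 + B ^ 2))
    (hβ : β = (A * D - B * C) / (A ^ 2 + B ^ 2))
    -- the contraction with the real symmetric tensor R followed by symmetrization,
    -- x ↦ R^μ_{(α} x_{β)μγδ}; it is ℂ-linear, real, and commutes with the Hodge dual
    (CR : Dm →ₗ[ℂ] Em)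
    (hCRconj : ∀ x, CR (conjD x) = conjE (CR x))
    (hCRs : ∀ x, CR (s x) = sE (CR x)) :
    -- P = W - αG - βη is twice the real part of 𝒫 = 𝒲 + (b/a)𝒢
    (Wd - (α : ℂ) • Gd - (β : ℂ) • ηd =
        (((1 : ℂ) / 2) • (Wd - Complex.I • s Wd) +
          (b / a) • (((1 : ℂ) / 2) • (Gd - Complex.I • ηd))) +
        conjD (((1 : ℂ) / 2) • (Wd - Complex.I • s Wd) +
          (b / a) • (((1 : ℂ) / 2) • (Gd - Complex.I • ηd)))) ∧
    -- the real alignment condition is equivalent to the complex one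
    (CR (Wd - (α : ℂ) • Gd - (β : ℂ) • ηd) = 0 ↔
      CR (((1 : ℂ) / 2) • (Wd - Complex.I • s Wd) +
        (b / a) • (((1 : ℂ) / 2) • (Gd - Complex.I • ηd))) = 0) := by
  have hre : (b / a).re = -α := by
    rw [ha, hb, div_div_div_cancel_right₀ two_ne_zero, div_sub_mul_I_re, hα, neg_div, neg_neg]
  have him : (b / a).im = -β := by
    rw [ha, hb, div_div_div_cancel_right₀ two_ne_zero, div_sub_mul_I_im, hβ, ← neg_div, neg_sub]
  let σ : Dm →ₗ⋆[ℂ] Dm := { toFun := conjD, map_add' := hDadd, map_smul' := hDsmul }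
  set Pc := ((1 : ℂ) / 2) • (Wd - Complex.I • s Wd) +
    (b / a) • (((1 : ℂ) / 2) • (Gd - Complex.I • ηd)) with hPc
  have hPcs : Pc = selfDualPart s Wd + (b / a) • selfDualPart s Gd := by
    rw [hPc, selfDualPart, selfDualPart, hsG]
  have hP : Wd - (α : ℂ) • Gd - (β : ℂ) • ηd = Pc + conjD Pc := by
    rw [hPcs]
    change _ = _ + σ _
    rw [selfDualPart_add_smul_selfDualPart_add_conj σ hsconj hWreal hGreal, hre, him, hsG]
    push_cast
    module
  refine ⟨hP, ?_⟩
  have hsPc : s Pc = I • Pc := by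
    rw [hPcs, map_add, map_smul, apply_selfDualPart hs2, apply_selfDualPart hs2, smul_add,
      smul_comm I (b / a)]
  rw [hP, map_add, hCRconj]
  exact add_conj_eq_zero_iff_of_apply_eq_I_smul conjE hEsmul sE hsEconj
    (by rw [← hCRs, hsPc, map_smul])

/-- With `2a = A - iB`, `2b = C - iD`, `A² + B² ≠ 0`,
`α = -(AC+BD)/(A²+B²)`, `β = (AD-BC)/(A²+B²)`, the real double 2-form
`P = W - αG - βη` is twice the real part of the self-dual tensor `𝒫 = 𝒲 + (b/a)𝒢`,
where `𝒲 = (1/2)(W - i∗W)` and `𝒢 = (1/2)(G - iη)`; consequently, for a real symmetric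
tensor `R`, the real alignment condition `R^μ_{(α}P_{β)μγδ} = 0` is equivalent to the
complex one `R^μ_{(α}𝒫_{β)μγδ} = 0`. -/
theorem real_vs_complex_alignment
    -- Dm: complexified double 2-forms; Em: complexified target of the contraction with R
    (Dm Em : Type*) [AddCommGroup Dm] [Module ℂ Dm] [AddCommGroup Em] [Module ℂ Em]
    -- conjugations (real structures)
    (conjD : Dm → Dm)
    (hDadd : ∀ x y, conjD (x + y) = conjD x + conjD y)
    (hDsmul : ∀ (c : ℂ) (x : Dm), conjD (c • x) = (starRingEnd ℂ c) • conjD x)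
    (hDinv : ∀ x, conjD (conjD x) = x)
    (conjE : Em → Em)
    (hEadd : ∀ x y, conjE (x + y) = conjE x + conjE y)
    (hEsmul : ∀ (c : ℂ) (x : Em), conjE (c • x) = (starRingEnd ℂ c) • conjE x)
    (hEinv : ∀ x, conjE (conjE x) = x)
    -- the Hodge dual acting on the last index pair of double 2-forms, and on the target
    (s : Module.End ℂ Dm) (hs2 : s * s = -1)
    (hsconj : ∀ x, conjD (s x) = s (conjD x))
    (sE : Module.End ℂ Em) (hsE2 : sE * sE = -1)
    (hsEconj : ∀ x, conjE (sE x) = sE (conjE x))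
    -- the real tensors W (Weyl), G = (1/2)g∧g and η (volume element); ∗G = η, ∗η = -G
    (Wd Gd ηd : Dm)
    (hWreal : conjD Wd = Wd) (hGreal : conjD Gd = Gd) (hηreal : conjD ηd = ηd)
    (hsG : s Gd = ηd) (hsη : s ηd = -Gd)
    -- the invariants
    (A B C D : ℝ) (hABne : A ^ 2 + B ^ 2 ≠ 0)
    (a b : ℂ)
    (ha : a = ((A : ℂ) - (B : ℂ) * Complex.I) / 2)
    (hb : b = ((C : ℂ) - (D : ℂ) * Complex.I) / 2)
    (α β : ℝ)
    (hα : α = -(A * C + B * D) / (A ^ 2 + B ^ 2))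
    (hβ : β = (A * D - B * C) / (A ^ 2 + B ^ 2))
    -- the contraction with the real symmetric tensor R followed by symmetrization,
    -- x ↦ R^μ_{(α} x_{β)μγδ}; it is ℂ-linear, real, and commutes with the Hodge dual
    (CR : Dm →ₗ[ℂ] Em)
    (hCRconj : ∀ x, CR (conjD x) = conjE (CR x))
    (hCRs : ∀ x, CR (s x) = sE (CR x)) :
    -- P = W - αG - βη is twice the real part of 𝒫 = 𝒲 + (b/a)𝒢
    (Wd - (α : ℂ) • Gd - (β : ℂ) • ηd =
        (((1 : ℂ) / 2) • (Wd - Complex.I • s Wd) +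
          (b / a) • (((1 : ℂ) / 2) • (Gd - Complex.I • ηd))) +
        conjD (((1 : ℂ) / 2) • (Wd - Complex.I • s Wd) +
          (b / a) • (((1 : ℂ) / 2) • (Gd - Complex.I • ηd)))) ∧
    -- the real alignment condition is equivalent to the complex one
    (CR (Wd - (α : ℂ) • Gd - (β : ℂ) • ηd) = 0 ↔
      CR (((1 : ℂ) / 2) • (Wd - Complex.I • s Wd) +
        (b / a) • (((1 : ℂ) / 2) • (Gd - Complex.I • ηd))) = 0) :=
  real_vs_complex_alignment_general Dm Em conjD hDadd hDsmul conjE hEsmul s hs2 hsconj sE hsEconj Wd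
    Gd ηd hWreal hGreal hsG A B C D a b ha hb α β hα hβ CR hCRconj hCRs
end
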